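/- The number of partitions of n into distinct parts with smallest part odd is odd if and only if n is a perfect square. -/

import Mathlib

open scoped Classical in
/-- `Pdo n` : partitions of `n` into distinct parts with smallest part odd,
encoded as finsets of parts. -/
noncomputable def Pdo (n : ℕ) : Finset (Finset ℕ) :=
  (Finset.range (n + 1)).powerset.filter
    (fun S => S.sum id = n ∧ ∃ m ∈ S, Odd m ∧ ∀ x ∈ S, m ≤ x)

/-!
Sort the partitions by their number `r` of odd parts. If the least part `a` is odd, replacing it
by `a - 1` and lowering every other odd part by `2` is a bijection onto the sets with `r - 1` odd
parts, even least element (possibly `0`) and sum `n - (2r - 1)`. Adding or removing `0` pairs off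
all sets with a given sum and number of odd parts, so modulo `2` the sets with even least element
are as many as those without one. Hence, by induction on `r`, the number of sets with sum `n`,
`r` odd elements and no even least element is odd exactly when `n = r²`; for `n ≠ 0` these sets
are the partitions of the stratum `r`.
-/

open Finset

theorem Finset.even_card_of_insert_mem_iff {α : Type*} [DecidableEq α] {𝒜 : Finset (Finset α)}
    {a : α} (h : ∀ s, a ∉ s → (insert a s ∈ 𝒜 ↔ s ∈ 𝒜)) : Even #𝒜 := by
  have : 𝒜.memberSubfamily a = 𝒜.nonMemberSubfamily a := by
    ext s
    rw [mem_memberSubfamily, mem_nonMemberSubfamily]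
    exact and_congr_left (h s)
  rw [← card_memberSubfamily_add_card_nonMemberSubfamily a 𝒜, this]
  exact ⟨_, rfl⟩

theorem IsLeast.lt_of_mem_erase {α : Type*} [LinearOrder α] {s : Finset α} {a x : α}
    (ha : IsLeast (s : Set α) a) (hx : x ∈ s.erase a) : a < x :=
  (ha.2 (mem_of_mem_erase hx)).lt_of_ne (ne_of_mem_erase hx).symm

namespace DistinctParts

open scoped Classical

def oddCount (S : Finset ℕ) : ℕ := ∑ x ∈ S, x % 2

def sumOddFinsets (n r : ℕ) : Finset (Finset ℕ) :=
  (range (n + 1)).powerset.filter fun S => ∑ x ∈ S, x = n ∧ oddCount S = r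

theorem mem_powerset_range_of_sum_eq {S : Finset ℕ} {n : ℕ} (h : ∑ x ∈ S, x = n) :
    S ∈ (range (n + 1)).powerset := mem_powerset.mpr fun _ hx =>
  mem_range.mpr (Nat.lt_succ_of_le (h ▸ single_le_sum (f := id) (fun _ _ => Nat.zero_le _) hx))

theorem mem_sumOddFinsets {S : Finset ℕ} {n r : ℕ} :
    S ∈ sumOddFinsets n r ↔ ∑ x ∈ S, x = n ∧ oddCount S = r :=
  mem_filter.trans (and_iff_right_of_imp fun h => mem_powerset_range_of_sum_eq h.1)

/-- Toggling the element `0` pairs these sets off. -/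
theorem even_card_sumOddFinsets (n r : ℕ) : Even #(sumOddFinsets n r) :=
  even_card_of_insert_mem_iff (a := 0) fun S h0 => by
    simp only [mem_sumOddFinsets, oddCount, sum_insert h0, Nat.zero_mod, zero_add]

def HasEvenMin (S : Finset ℕ) : Prop := ∃ a, IsLeast (S : Set ℕ) a ∧ Even a

theorem not_hasEvenMin_of_isLeast {S : Finset ℕ} {a : ℕ} (ha : IsLeast (S : Set ℕ) a)
    (hodd : Odd a) : ¬ HasEvenMin S := fun ⟨_, hb, heven⟩ =>
  Nat.not_even_iff_odd.mpr hodd (ha.unique hb ▸ heven)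

theorem not_hasEvenMin_iff {S : Finset ℕ} (hS : S.Nonempty) :
    ¬ HasEvenMin S ↔ ∃ a, IsLeast (S : Set ℕ) a ∧ Odd a := by
  refine ⟨fun h => ⟨S.min' hS, isLeast_min' S hS, ?_⟩, fun ⟨a, ha, hodd⟩ =>
    not_hasEvenMin_of_isLeast ha hodd⟩
  exact Nat.not_even_iff_odd.mp fun he => h ⟨_, isLeast_min' S hS, he⟩

theorem hasEvenMin_of_oddCount_eq_zero {S : Finset ℕ} (hS : S.Nonempty) (h : oddCount S = 0) :
    HasEvenMin S :=
  ⟨S.min' hS, isLeast_min' S hS, Nat.even_iff.mpr ((sum_eq_zero_iff.mp h) _ (min'_mem S hS))⟩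

def raiseOdd (x : ℕ) : ℕ := x + 2 * (x % 2)

def lowerOdd (x : ℕ) : ℕ := x - 2 * (x % 2)

theorem lowerOdd_raiseOdd (x : ℕ) : lowerOdd (raiseOdd x) = x := by
  unfold lowerOdd raiseOdd; omega

theorem raiseOdd_lowerOdd {x : ℕ} (hx : x ≠ 1) : raiseOdd (lowerOdd x) = x := by
  unfold lowerOdd raiseOdd; omega

theorem raiseOdd_injective : Function.Injective raiseOdd :=
  Function.LeftInverse.injective lowerOdd_raiseOdd

def shiftUp (b : ℕ) (T : Finset ℕ) : Finset ℕ := insert (b + 1) ((T.erase b).image raiseOdd)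

def shiftDown (a : ℕ) (S : Finset ℕ) : Finset ℕ := insert (a - 1) ((S.erase a).image lowerOdd)

section Shift

variable {S T : Finset ℕ} {a b : ℕ}

theorem lt_of_mem_image_raiseOdd (hb : IsLeast (T : Set ℕ) b) (heven : Even b) {y : ℕ}
    (hy : y ∈ (T.erase b).image raiseOdd) : b + 1 < y := by
  obtain ⟨x, hx, rfl⟩ := mem_image.mp hy
  have hbx := hb.lt_of_mem_erase hx
  obtain ⟨k, rfl⟩ := heven
  unfold raiseOdd; omega

theorem lt_of_mem_image_lowerOdd (ha : IsLeast (S : Set ℕ) a) (hodd : Odd a) {y : ℕ}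
    (hy : y ∈ (S.erase a).image lowerOdd) : a - 1 < y := by
  obtain ⟨x, hx, rfl⟩ := mem_image.mp hy
  have hax := ha.lt_of_mem_erase hx
  obtain ⟨k, rfl⟩ := hodd
  unfold lowerOdd; omega

theorem isLeast_shiftUp (hb : IsLeast (T : Set ℕ) b) (heven : Even b) :
    IsLeast (shiftUp b T : Set ℕ) (b + 1) := by
  refine ⟨mem_insert_self _ _, fun y hy => ?_⟩
  rcases mem_insert.mp hy with rfl | hy
  exacts [le_rfl, (lt_of_mem_image_raiseOdd hb heven hy).le]

theorem isLeast_shiftDown (ha : IsLeast (S : Set ℕ) a) (hodd : Odd a) :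
    IsLeast (shiftDown a S : Set ℕ) (a - 1) := by
  refine ⟨mem_insert_self _ _, fun y hy => ?_⟩
  rcases mem_insert.mp hy with rfl | hy
  exacts [le_rfl, (lt_of_mem_image_lowerOdd ha hodd hy).le]

theorem shiftDown_shiftUp (hb : IsLeast (T : Set ℕ) b) (heven : Even b) :
    shiftDown (b + 1) (shiftUp b T) = T := by
  rw [shiftDown, shiftUp, erase_insert fun h => (lt_of_mem_image_raiseOdd hb heven h).false,
    image_image, Function.LeftInverse.comp_eq_id lowerOdd_raiseOdd, image_id, Nat.add_sub_cancel,
    insert_erase hb.1]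

theorem shiftUp_shiftDown (ha : IsLeast (S : Set ℕ) a) (hodd : Odd a) :
    shiftUp (a - 1) (shiftDown a S) = S := by
  have hinv : Set.EqOn (raiseOdd ∘ lowerOdd) id (S.erase a) := fun x hx => by
    have hax := ha.lt_of_mem_erase hx
    exact raiseOdd_lowerOdd (by obtain ⟨k, rfl⟩ := hodd; omega)
  rw [shiftUp, shiftDown, erase_insert fun h => (lt_of_mem_image_lowerOdd ha hodd h).false,
    image_image, image_congr hinv, image_id, Nat.sub_add_cancel hodd.pos, insert_erase ha.1]

theorem sum_shiftUp (hb : IsLeast (T : Set ℕ) b) (heven : Even b) :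
    ∑ x ∈ shiftUp b T, x = ∑ x ∈ T, x + 2 * oddCount T + 1 := by
  rw [shiftUp, sum_insert fun h => (lt_of_mem_image_raiseOdd hb heven h).false,
    sum_image raiseOdd_injective.injOn, oddCount, ← sum_erase_add T _ hb.1,
    ← sum_erase_add T _ hb.1]
  simp only [raiseOdd, sum_add_distrib, ← mul_sum, Nat.even_iff.mp heven]
  ring

theorem oddCount_shiftUp (hb : IsLeast (T : Set ℕ) b) (heven : Even b) :
    oddCount (shiftUp b T) = oddCount T + 1 := by
  rw [oddCount, shiftUp, sum_insert fun h => (lt_of_mem_image_raiseOdd hb heven h).false,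
    sum_image raiseOdd_injective.injOn, oddCount, ← sum_erase_add T _ hb.1]
  have := Nat.even_iff.mp heven
  simp only [raiseOdd, Nat.add_mul_mod_self_left]
  omega

theorem sum_eq_sum_shiftDown (ha : IsLeast (S : Set ℕ) a) (hodd : Odd a) :
    ∑ x ∈ S, x = ∑ x ∈ shiftDown a S, x + 2 * oddCount (shiftDown a S) + 1 := by
  conv_lhs => rw [← shiftUp_shiftDown ha hodd]
  exact sum_shiftUp (isLeast_shiftDown ha hodd) (Nat.Odd.sub_odd hodd odd_one)

theorem oddCount_eq_oddCount_shiftDown (ha : IsLeast (S : Set ℕ) a) (hodd : Odd a) :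
    oddCount S = oddCount (shiftDown a S) + 1 := by
  conv_lhs => rw [← shiftUp_shiftDown ha hodd]
  exact oddCount_shiftUp (isLeast_shiftDown ha hodd) (Nat.Odd.sub_odd hodd odd_one)

end Shift

theorem exists_isLeast_odd_of_mem {S : Finset ℕ} {n r : ℕ}
    (hS : S ∈ {S ∈ sumOddFinsets n (r + 1) | ¬ HasEvenMin S}) :
    ∃ a, IsLeast (S : Set ℕ) a ∧ Odd a := by
  obtain ⟨hS, hmin⟩ := mem_filter.mp hS
  have hne : S.Nonempty :=
    nonempty_of_sum_ne_zero ((mem_sumOddFinsets.mp hS).2.trans_ne (Nat.succ_ne_zero r))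
  exact (not_hasEvenMin_iff hne).mp hmin

theorem card_filter_not_hasEvenMin_add (m r : ℕ) :
    #{S ∈ sumOddFinsets (m + (2 * r + 1)) (r + 1) | ¬ HasEvenMin S} =
      #{T ∈ sumOddFinsets m r | HasEvenMin T} := by
  refine card_bij' (fun S _ => shiftDown (sInf (S : Set ℕ)) S)
    (fun T _ => shiftUp (sInf (T : Set ℕ)) T) (fun S hS => ?_) (fun T hT => ?_) (fun S hS => ?_)
    (fun T hT => ?_)
  · obtain ⟨a, ha, hodd⟩ := exists_isLeast_odd_of_mem hS
    have hsum := sum_eq_sum_shiftDown ha hodd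
    have hcount := oddCount_eq_oddCount_shiftDown ha hodd
    rw [mem_filter, mem_sumOddFinsets] at hS
    rw [ha.csInf_eq, mem_filter, mem_sumOddFinsets]
    exact ⟨⟨by omega, by omega⟩, _, isLeast_shiftDown ha hodd, Nat.Odd.sub_odd hodd odd_one⟩
  · obtain ⟨hT, b, hb, heven⟩ := mem_filter.mp hT
    rw [mem_sumOddFinsets] at hT
    rw [hb.csInf_eq, mem_filter, mem_sumOddFinsets, sum_shiftUp hb heven, oddCount_shiftUp hb heven]
    exact ⟨⟨by omega, by omega⟩,
      not_hasEvenMin_of_isLeast (isLeast_shiftUp hb heven) heven.add_one⟩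
  · obtain ⟨a, ha, hodd⟩ := exists_isLeast_odd_of_mem hS
    rw [ha.csInf_eq, (isLeast_shiftDown ha hodd).csInf_eq, shiftUp_shiftDown ha hodd]
  · obtain ⟨b, hb, heven⟩ := (mem_filter.mp hT).2
    rw [hb.csInf_eq, (isLeast_shiftUp hb heven).csInf_eq, shiftDown_shiftUp hb heven]

theorem filter_not_hasEvenMin_eq_empty {n r : ℕ} (hn : n < 2 * r + 1) :
    {S ∈ sumOddFinsets n (r + 1) | ¬ HasEvenMin S} = ∅ := by
  refine eq_empty_of_forall_notMem fun S hS => ?_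
  obtain ⟨a, ha, hodd⟩ := exists_isLeast_odd_of_mem hS
  have hsum := sum_eq_sum_shiftDown ha hodd
  have hcount := oddCount_eq_oddCount_shiftDown ha hodd
  rw [mem_filter, mem_sumOddFinsets] at hS
  omega

theorem filter_not_hasEvenMin_zero (n : ℕ) :
    {S ∈ sumOddFinsets n 0 | ¬ HasEvenMin S} = if n = 0 then {∅} else ∅ := by
  have : {S ∈ sumOddFinsets n 0 | ¬ HasEvenMin S} = {S ∈ sumOddFinsets n 0 | S = ∅} :=
    filter_congr fun S hS => ⟨fun h => not_nonempty_iff_eq_empty.mp fun hne =>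
      h (hasEvenMin_of_oddCount_eq_zero hne (mem_sumOddFinsets.mp hS).2), by
        rintro rfl ⟨_, ha, _⟩
        exact notMem_empty _ ha.1⟩
  rw [this, filter_eq']
  simp [mem_sumOddFinsets, oddCount, eq_comm]

theorem odd_card_filter_not_hasEvenMin_iff (n r : ℕ) :
    Odd #{S ∈ sumOddFinsets n r | ¬ HasEvenMin S} ↔ n = r * r := by
  induction r generalizing n with
  | zero => by_cases hn : n = 0 <;> simp [filter_not_hasEvenMin_zero, hn]
  | succ r ih =>
    obtain hn | hn := lt_or_ge n (2 * r + 1)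
    · rw [filter_not_hasEvenMin_eq_empty hn]
      simp only [card_empty, Nat.not_odd_zero, false_iff]
      nlinarith
    obtain ⟨m, rfl⟩ := Nat.exists_eq_add_of_le' hn
    have hpar := even_card_sumOddFinsets m r
    rw [← card_filter_add_card_filter_not (p := HasEvenMin), Nat.even_add] at hpar
    rw [card_filter_not_hasEvenMin_add, ← Nat.not_even_iff_odd, hpar, Nat.not_even_iff_odd, ih]
    constructor <;> intro h <;> nlinarith

theorem oddCount_le_sum (S : Finset ℕ) : oddCount S ≤ ∑ x ∈ S, x :=
  sum_le_sum fun x _ => Nat.mod_le x 2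

theorem mem_Pdo {S : Finset ℕ} {n : ℕ} :
    S ∈ Pdo n ↔ ∑ x ∈ S, x = n ∧ ∃ a, IsLeast (S : Set ℕ) a ∧ Odd a := by
  rw [Pdo, mem_filter, and_iff_right_of_imp fun h => mem_powerset_range_of_sum_eq h.1]
  refine and_congr Iff.rfl ⟨fun ⟨a, ha, hodd, hle⟩ => ⟨a, ⟨ha, hle⟩, hodd⟩,
    fun ⟨a, ⟨ha, hle⟩, hodd⟩ => ⟨a, ha, hodd, hle⟩⟩

theorem filter_Pdo_oddCount_eq {n : ℕ} (hn : n ≠ 0) (r : ℕ) :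
    {S ∈ Pdo n | oddCount S = r} = {S ∈ sumOddFinsets n r | ¬ HasEvenMin S} := by
  ext S
  simp only [mem_filter, mem_Pdo, mem_sumOddFinsets]
  by_cases hsum : ∑ x ∈ S, x = n
  · rw [not_hasEvenMin_iff (nonempty_of_sum_ne_zero (hsum ▸ hn))]
    tauto
  · tauto

end DistinctParts

theorem odd_card_filter_eq_mul_self_iff (n : ℕ) :
    Odd #{r ∈ range (n + 1) | n = r * r} ↔ IsSquare n := by
  refine ⟨fun h => ?_, fun ⟨r, hr⟩ => ?_⟩
  · obtain ⟨r, hr⟩ := card_pos.mp h.pos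
    exact ⟨r, (mem_filter.mp hr).2⟩
  · have : {s ∈ range (n + 1) | n = s * s} = {r} := by
      refine eq_singleton_iff_unique_mem.mpr
        ⟨mem_filter.mpr ⟨mem_range.mpr ?_, hr⟩, fun s hs => ?_⟩
      · nlinarith
      · exact Nat.mul_self_inj.mp ((mem_filter.mp hs).2.symm.trans hr)
    rw [this, card_singleton]
    exact odd_one

open DistinctParts in
theorem odd_card_Pdo_iff_isSquare (n : ℕ) (hn : 1 ≤ n) :
    Odd (Pdo n).card ↔ IsSquare n := by
  have hcount : ∀ S ∈ Pdo n, oddCount S ∈ range (n + 1) := fun S hS =>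
    mem_range.mpr (Nat.lt_succ_of_le ((mem_Pdo.mp hS).1 ▸ oddCount_le_sum S))
  rw [card_eq_sum_card_fiberwise hcount, odd_sum_iff_odd_card_odd]
  simp_rw [filter_Pdo_oddCount_eq (Nat.one_le_iff_ne_zero.mp hn),
    odd_card_filter_not_hasEvenMin_iff]
  exact odd_card_filter_eq_mul_self_iff n
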